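/- Set F₀ = (1/8)E₀, F₁ = (1/8)E₁, F₂ = (1/8)E₆, F₃ = (1/8)E₈, F₄ = (1/8)E₁₀, F₅ = (1/8)E₁₅, F₆ = (1/4)E₂₃, and Θ₀ = Ω₀, Θ₁ = Ω₂, Θ₂ = Ω₆, Θ₃ = Ω₇, Θ₄ = Ω₁₂, Θ₅ = Ω₁₃, Θ₆ = Ω₁₅. Then (i) \sum_{y=0}^{6} F_y = Ē, so (F_y) is a measurement of the bipartite HS system, and (ii) Tr(F_yᵀ Θ_x) = ξ_{x,y} for all x, y ∈ {0, …, 6}, so the correlation ξ is obtainable in the HS Model using only factorized states. -/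
import Mathlib


open Matrix

/-- The four extremal states of the squit. -/
noncomputable def ws : Fin 4 → (Fin 3 → ℝ) :=
  ![![1, 0, 1], ![0, 1, 1], ![-1, 0, 1], ![0, -1, 1]]

/-- The four extremal normalized effects of the squit. -/
noncomputable def es : Fin 4 → (Fin 3 → ℝ) :=
  ![![1, 1, 1], ![-1, 1, 1], ![-1, -1, 1], ![1, -1, 1]]

/-- The eight entangled extremal bipartite states `Ω₁₆, …, Ω₂₃`. -/
noncomputable def OmegaEnt : Fin 8 → Matrix (Fin 3) (Fin 3) ℝ :=
  ![(1/2 : ℝ) • Matrix.of ![![-1, 1, 0], ![1, 1, 0], ![0, 0, 2]],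
    (1/2 : ℝ) • Matrix.of ![![-1, -1, 0], ![-1, 1, 0], ![0, 0, 2]],
    (1/2 : ℝ) • Matrix.of ![![1, -1, 0], ![-1, -1, 0], ![0, 0, 2]],
    (1/2 : ℝ) • Matrix.of ![![1, 1, 0], ![1, -1, 0], ![0, 0, 2]],
    (1/2 : ℝ) • Matrix.of ![![-1, -1, 0], ![1, -1, 0], ![0, 0, 2]],
    (1/2 : ℝ) • Matrix.of ![![1, -1, 0], ![1, 1, 0], ![0, 0, 2]],
    (1/2 : ℝ) • Matrix.of ![![1, 1, 0], ![-1, 1, 0], ![0, 0, 2]],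
    (1/2 : ℝ) • Matrix.of ![![-1, 1, 0], ![-1, -1, 0], ![0, 0, 2]]]

/-- The eight entangled extremal bipartite normalized effects `E₁₆, …, E₂₃`. -/
noncomputable def EEnt : Fin 8 → Matrix (Fin 3) (Fin 3) ℝ :=
  ![Matrix.of ![![-1, 1, 0], ![1, 1, 0], ![0, 0, 1]],
    Matrix.of ![![-1, -1, 0], ![-1, 1, 0], ![0, 0, 1]],
    Matrix.of ![![1, -1, 0], ![-1, -1, 0], ![0, 0, 1]],
    Matrix.of ![![1, 1, 0], ![1, -1, 0], ![0, 0, 1]],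
    Matrix.of ![![-1, 1, 0], ![-1, -1, 0], ![0, 0, 1]],
    Matrix.of ![![1, 1, 0], ![-1, 1, 0], ![0, 0, 1]],
    Matrix.of ![![1, -1, 0], ![1, 1, 0], ![0, 0, 1]],
    Matrix.of ![![-1, -1, 0], ![1, -1, 0], ![0, 0, 1]]]

/-- The 24 extremal bipartite states `Ω₀, …, Ω₂₃`: the 16 factorized states
`Ω_{4i+j} = ω_i ω_jᵀ` followed by the 8 entangled ones. -/
noncomputable def Omegas : Fin 24 → Matrix (Fin 3) (Fin 3) ℝ := fun x =>
  if h : (x : ℕ) < 16 then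
    Matrix.vecMulVec (ws ⟨(x : ℕ) / 4, by omega⟩) (ws ⟨(x : ℕ) % 4, by omega⟩)
  else OmegaEnt ⟨(x : ℕ) - 16, by have := x.isLt; omega⟩

/-- The 24 extremal bipartite normalized effects `E₀, …, E₂₃`: the 16 factorized
effects `E_{4i+j} = e_i e_jᵀ` followed by the 8 entangled ones. -/
noncomputable def Effs : Fin 24 → Matrix (Fin 3) (Fin 3) ℝ := fun x =>
  if h : (x : ℕ) < 16 then
    Matrix.vecMulVec (es ⟨(x : ℕ) / 4, by omega⟩) (es ⟨(x : ℕ) % 4, by omega⟩)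
  else EEnt ⟨(x : ℕ) - 16, by have := x.isLt; omega⟩

/-- The bipartite unit effect `Ē = ē ēᵀ` with `ē = (0,0,1)`. -/
noncomputable def Ebar : Matrix (Fin 3) (Fin 3) ℝ :=
  Matrix.vecMulVec ![0, 0, 1] ![0, 0, 1]

/-- The hypersignaling correlation `ξ`. -/
noncomputable def xi : Matrix (Fin 7) (Fin 7) ℝ :=
  (1/2 : ℝ) • Matrix.of
    ![![1,0,0,0,0,1,0],
      ![0,1,0,0,0,0,1],
      ![0,1,1,0,0,0,0],
      ![0,0,1,0,0,0,1],
      ![0,0,0,1,0,1,0],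
      ![0,0,0,1,0,0,1],
      ![0,0,0,0,1,1,0]]

lemma effs0 : Effs 0 = !![1, 1, 1 ; 1, 1, 1 ; 1, 1, 1] := by
  ext i j; fin_cases i <;> fin_cases j <;> norm_num [Effs, show ((0 : Fin 24):ℕ) = 0 from rfl, es, Matrix.vecMulVec]

lemma effs1 : Effs 1 = !![-1, 1, 1 ; -1, 1, 1 ; -1, 1, 1] := by
  ext i j; fin_cases i <;> fin_cases j <;> norm_num [Effs, show ((1 : Fin 24):ℕ) = 1 from rfl, es, Matrix.vecMulVec]

lemma effs6 : Effs 6 = !![1, 1, -1 ; -1, -1, 1 ; -1, -1, 1] := by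
  ext i j; fin_cases i <;> fin_cases j <;> norm_num [Effs, show ((6 : Fin 24):ℕ) = 6 from rfl, es, Matrix.vecMulVec]

lemma effs8 : Effs 8 = !![-1, -1, -1 ; -1, -1, -1 ; 1, 1, 1] := by
  ext i j; fin_cases i <;> fin_cases j <;> norm_num [Effs, show ((8 : Fin 24):ℕ) = 8 from rfl, es, Matrix.vecMulVec]

lemma effs10 : Effs 10 = !![1, 1, -1 ; 1, 1, -1 ; -1, -1, 1] := by
  ext i j; fin_cases i <;> fin_cases j <;> norm_num [Effs, show ((10 : Fin 24):ℕ) = 10 from rfl, es, Matrix.vecMulVec]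

lemma effs15 : Effs 15 = !![1, -1, 1 ; -1, 1, -1 ; 1, -1, 1] := by
  ext i j; fin_cases i <;> fin_cases j <;> norm_num [Effs, show ((15 : Fin 24):ℕ) = 15 from rfl, es, Matrix.vecMulVec]

lemma effs23 : Effs 23 = !![-1, -1, 0 ; 1, -1, 0 ; 0, 0, 1] := by
  ext i j; fin_cases i <;> fin_cases j <;> norm_num [Effs, show ((23 : Fin 24):ℕ) = 23 from rfl, EEnt]

lemma omg0 : Omegas 0 = !![1, 0, 1 ; 0, 0, 0 ; 1, 0, 1] := by
  ext i j; fin_cases i <;> fin_cases j <;> norm_num [Omegas, show ((0 : Fin 24):ℕ) = 0 from rfl, ws, Matrix.vecMulVec]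

lemma omg2 : Omegas 2 = !![-1, 0, 1 ; 0, 0, 0 ; -1, 0, 1] := by
  ext i j; fin_cases i <;> fin_cases j <;> norm_num [Omegas, show ((2 : Fin 24):ℕ) = 2 from rfl, ws, Matrix.vecMulVec]

lemma omg6 : Omegas 6 = !![0, 0, 0 ; -1, 0, 1 ; -1, 0, 1] := by
  ext i j; fin_cases i <;> fin_cases j <;> norm_num [Omegas, show ((6 : Fin 24):ℕ) = 6 from rfl, ws, Matrix.vecMulVec]

lemma omg7 : Omegas 7 = !![0, 0, 0 ; 0, -1, 1 ; 0, -1, 1] := by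
  ext i j; fin_cases i <;> fin_cases j <;> norm_num [Omegas, show ((7 : Fin 24):ℕ) = 7 from rfl, ws, Matrix.vecMulVec]

lemma omg12 : Omegas 12 = !![0, 0, 0 ; -1, 0, -1 ; 1, 0, 1] := by
  ext i j; fin_cases i <;> fin_cases j <;> norm_num [Omegas, show ((12 : Fin 24):ℕ) = 12 from rfl, ws, Matrix.vecMulVec]

lemma omg13 : Omegas 13 = !![0, 0, 0 ; 0, -1, -1 ; 0, 1, 1] := by
  ext i j; fin_cases i <;> fin_cases j <;> norm_num [Omegas, show ((13 : Fin 24):ℕ) = 13 from rfl, ws, Matrix.vecMulVec]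

lemma omg15 : Omegas 15 = !![0, 0, 0 ; 0, 1, -1 ; 0, -1, 1] := by
  ext i j; fin_cases i <;> fin_cases j <;> norm_num [Omegas, show ((15 : Fin 24):ℕ) = 15 from rfl, ws, Matrix.vecMulVec]

/-- The measurement realizing `ξ`:
`F = {E₀/8, E₁/8, E₆/8, E₈/8, E₁₀/8, E₁₅/8, E₂₃/4}`. -/
noncomputable def F : Fin 7 → Matrix (Fin 3) (Fin 3) ℝ :=
  ![(1/8 : ℝ) • Effs 0, (1/8 : ℝ) • Effs 1, (1/8 : ℝ) • Effs 6,
    (1/8 : ℝ) • Effs 8, (1/8 : ℝ) • Effs 10, (1/8 : ℝ) • Effs 15,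
    (1/4 : ℝ) • Effs 23]

/-- The seven factorized states realizing `ξ`:
`Θ = {Ω₀, Ω₂, Ω₆, Ω₇, Ω₁₂, Ω₁₃, Ω₁₅}`. -/
noncomputable def Th : Fin 7 → Matrix (Fin 3) (Fin 3) ℝ :=
  ![Omegas 0, Omegas 2, Omegas 6, Omegas 7, Omegas 12, Omegas 13, Omegas 15]

lemma cv5 {α : Type*} (a b c d e f g : α) : ![a,b,c,d,e,f,g] (5 : Fin 7) = f := rfl

lemma cv6 {α : Type*} (a b c d e f g : α) : ![a,b,c,d,e,f,g] (6 : Fin 7) = g := rfl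

lemma cA {α : Type*} (a : α) (u : Fin 6 → α) : Matrix.vecCons a u (5 : Fin 7) = u (4 : Fin 6) := rfl
lemma cB {α : Type*} (a : α) (u : Fin 6 → α) : Matrix.vecCons a u (6 : Fin 7) = u (5 : Fin 6) := rfl
lemma cC {α : Type*} (a : α) (u : Fin 5 → α) : Matrix.vecCons a u (5 : Fin 6) = u (4 : Fin 5) := rfl
lemma cD {α : Type*} (a : α) (u : Fin 5 → α) : Matrix.vecCons a u (4 : Fin 6) = u (3 : Fin 5) := rfl
lemma cE {α : Type*} (a : α) (u : Fin 4 → α) : Matrix.vecCons a u (4 : Fin 5) = u (3 : Fin 4) := rfl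
lemma cF {α : Type*} (a : α) (u : Fin 4 → α) : Matrix.vecCons a u (3 : Fin 5) = u (2 : Fin 4) := rfl
lemma cG {α : Type*} (a : α) (u : Fin 3 → α) : Matrix.vecCons a u (3 : Fin 4) = u (2 : Fin 3) := rfl
lemma cH {α : Type*} (a : α) (u : Fin 3 → α) : Matrix.vecCons a u (2 : Fin 4) = u (1 : Fin 3) := rfl

set_option maxHeartbeats 2000000 in
/-- `(F_y)` is a measurement of the bipartite HS system and measuring it on the
states `(Θ_x)` produces exactly the correlation `ξ`. -/
theorem xi_realized_in_HS_model :
    (∑ y, F y = Ebar) ∧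
    (∀ x y : Fin 7, Matrix.trace ((F y)ᵀ * Th x) = xi x y) := by
  have hxi : ∀ x y : Fin 7, xi x y = Matrix.of ![![(1:ℝ)/2,0,0,0,0,1/2,0],
      ![0,1/2,0,0,0,0,1/2], ![0,1/2,1/2,0,0,0,0], ![0,0,1/2,0,0,0,1/2],
      ![0,0,0,1/2,0,1/2,0], ![0,0,0,1/2,0,0,1/2], ![0,0,0,0,1/2,1/2,0]] x y := by
    intro x y
    fin_cases x <;> fin_cases y <;> norm_num [xi]
  constructor
  · ext i j
    fin_cases i <;> fin_cases j <;>
      · simp [Fin.sum_univ_seven, F, effs0, effs1, effs6, effs8, effs10, effs15, effs23, cv5, cv6,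
          Ebar, Matrix.vecMulVec]
        try norm_num
  · intro x y
    simp only [hxi]
    fin_cases x <;> fin_cases y <;>
      · simp [Matrix.trace, Matrix.mul_apply, Fin.sum_univ_three, F, Th,
          effs0, effs1, effs6, effs8, effs10, effs15, effs23,
          omg0, omg2, omg6, omg7, omg12, omg13, omg15, cv5, cv6, Matrix.diag, Matrix.transpose_apply, Matrix.vecHead, Matrix.vecTail, Function.comp,
          -Matrix.vecCons_const]
        try norm_num [cA, cB, cC, cD, cE, cF, cG, cH, -Matrix.vecCons_const]
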